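/- arXiv:1602.05355 — 3 statements merged into one kernel-verified Lean document; each statement's English description precedes it below -/
import Mathlib

section
/- Sequence-space boundedness of the hard-sphere BBGKY collision operators: Let N ≥ 1, ε > 0, β > β' > 0, b > 0 and b' > (β/β')^{3/2} b. Then there exists a constant C > 0, depending only on β, β', b, b' (and not on N, ε, j), such that for every sequence f = (f_k)_{k≥1} of measurable functions f_k : (ℝ³×ℝ³)^k → ℝ with ‖f‖_{b,β} := sup_k b^{-k}‖f_k‖_{k,β} < ∞, one has sup_{1 ≤ j ≤ N−1} b'^{-j} ‖C̃^ε_{j+1} f_{j+1}‖_{j,β'} ≤ C N ε² ‖f‖_{b,β}; i.e. the sequence of operators {C̃^ε_{j+1}}_{j≥1} maps the space with norm ‖·‖_{b,β} boundedly into the space with norm ‖·‖_{b',β'}. -/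
open MeasureTheory Real Metric
open scoped ENNReal RealInnerProductSpace

noncomputable section

/-- Three-dimensional Euclidean space. -/
abbrev V3 := EuclideanSpace ℝ (Fin 3)

/-- The `j`-particle phase space `(ℝ³ × ℝ³)^j`. -/
abbrev Phase (j : ℕ) := Fin j → V3 × V3

/-- The weighted sup-norm `‖f‖_{j,β}`. -/
def wnorm (β : ℝ) (j : ℕ) (f : Phase j → ℝ) : ℝ≥0∞ :=
  ⨆ z : Phase j, ENNReal.ofReal
    (|f z| * (β / (2 * π)) ^ (-(3 * (j : ℝ) / 2)) *
      Real.exp (β * ∑ i, ‖(z i).2‖ ^ 2 / 2))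

/-- The norm `‖f‖_{b,β} = sup_{k ≥ 1} b^{-k} ‖f_k‖_{k,β}` on sequences of
`k`-particle functions. -/
def seqNorm (b β : ℝ) (f : (k : ℕ) → Phase k → ℝ) : ℝ≥0∞ :=
  ⨆ (k : ℕ) (_ : 1 ≤ k), ENNReal.ofReal (b ^ (-(k : ℝ))) * wnorm β k (f k)

/-- The surface measure on the unit sphere `S² ⊂ ℝ³`. -/
def sphereMeasure : Measure (sphere (0 : V3) 1) := (volume : Measure V3).toSphere

/-- The hard-sphere BBGKY collision operator `C̃^ε_{j+1}`. -/
def collHS (N : ℕ) (ε : ℝ) (j : ℕ) (g : Phase (j + 1) → ℝ) : Phase j → ℝ :=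
  fun z =>
    ((N : ℝ) - j) * ε ^ 2 *
      ∑ i : Fin j,
        ∫ ω : sphere (0 : V3) 1, ∫ v : V3,
          ⟪(ω : V3), v - (z i).2⟫ * g (Fin.snoc z ((z i).1 + ε • (ω : V3), v))
            ∂volume ∂sphereMeasure

/-
Bound `|f_{j+1}|` by `b^{j+1} ‖f‖_{b,β}` times the Maxwellian `M_β^{⊗(j+1)}`. In each collision
term the new velocity is integrated against a Gaussian, leaving `(1 + |vᵢ|) M_β^{⊗j}(z)` up to
constants. Passing from `M_β` to `M_β'` costs `(β/β')^{3j/2}` and frees `e^{-(β-β')∑|vᵢ|²/2}`,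
which absorbs the `|vᵢ|`; the sum over `i` contributes a factor `j`, and `j ((β/β')^{3/2} b/b')^j`
is bounded because `(β/β')^{3/2} b < b'`.
-/

namespace Real

lemma mul_exp_neg_mul_le_inv {t a : ℝ} (ht : 0 < t) : a * exp (-(t * a)) ≤ t⁻¹ := by
  have h := (mul_exp_neg_le_exp_neg_one (t * a)).trans (exp_le_one_iff.2 (by norm_num))
  rw [mul_assoc] at h
  exact ((le_inv_mul_iff₀ ht).2 h).trans_eq (mul_one _)

lemma mul_exp_neg_mul_sq_le {c r : ℝ} (hc : 0 < c) :
    r * exp (-(c * r ^ 2)) ≤ exp c / (2 * c) := by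
  have hsq : -(c * r ^ 2) ≤ -(2 * c * r) + c := by nlinarith [sq_nonneg (r - 1)]
  rcases le_or_gt r 0 with hr | hr
  · exact (mul_nonpos_of_nonpos_of_nonneg hr (exp_pos _).le).trans (by positivity)
  calc r * exp (-(c * r ^ 2)) ≤ r * exp (-(2 * c * r)) * exp c := by
        rw [mul_assoc, ← exp_add]; gcongr
    _ ≤ (2 * c)⁻¹ * exp c := by gcongr; exact mul_exp_neg_mul_le_inv (by positivity)
    _ = exp c / (2 * c) := by ring

lemma nat_mul_pow_le_inv_log {q : ℝ} (hq₀ : 0 < q) (hq₁ : q < 1) (j : ℕ) :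
    j * q ^ j ≤ (log q⁻¹)⁻¹ := by
  have hq : q ^ j = exp (-(log q⁻¹ * j)) := by
    rw [log_inv, neg_mul, neg_neg, mul_comm, exp_nat_mul, exp_log hq₀]
  rw [hq]
  exact mul_exp_neg_mul_le_inv (log_pos ((one_lt_inv₀ hq₀).2 hq₁))

end Real

lemma Finset.sum_mul_exp_neg_sum_sq_le {ι : Type*} (s : Finset ι) {A B δ : ℝ} (hA : 0 ≤ A)
    (hB : 0 ≤ B) (hδ : 0 < δ) {r : ι → ℝ} (hr : ∀ i ∈ s, 0 ≤ r i) :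
    (∑ i ∈ s, (A + r i * B)) * rexp (-(δ * ∑ i ∈ s, r i ^ 2 / 2)) ≤
      s.card * (A + B * (rexp (δ / 2) / δ)) := by
  set e := rexp (-(δ * ∑ i ∈ s, r i ^ 2 / 2))
  have he : e ≤ 1 :=
    Real.exp_le_one_iff.2 (neg_nonpos.2 (mul_nonneg hδ.le (sum_nonneg fun i _ => by positivity)))
  have hre : ∀ i ∈ s, r i * e ≤ rexp (δ / 2) / δ := fun i hi =>
    calc r i * e ≤ r i * rexp (-(δ / 2 * r i ^ 2)) := by
          refine mul_le_mul_of_nonneg_left (Real.exp_le_exp.2 ?_) (hr i hi)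
          have := single_le_sum (f := fun k => r k ^ 2 / 2) (fun k _ => by positivity) hi
          linarith [mul_le_mul_of_nonneg_left this hδ.le]
      _ ≤ rexp (δ / 2) / (2 * (δ / 2)) := Real.mul_exp_neg_mul_sq_le (by positivity)
      _ = rexp (δ / 2) / δ := by ring
  rw [sum_mul, ← nsmul_eq_mul, ← sum_const]
  refine sum_le_sum fun i hi => ?_
  calc (A + r i * B) * e = A * e + B * (r i * e) := by ring
    _ ≤ A + B * (rexp (δ / 2) / δ) := by
        gcongr
        exacts [mul_le_of_le_one_right hA he, hre i hi]

section GaussianMoments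

variable {E : Type*} [NormedAddCommGroup E] [InnerProductSpace ℝ E] [FiniteDimensional ℝ E]
  [MeasurableSpace E] [BorelSpace E]

lemma integrable_exp_neg_mul_sq_norm {c : ℝ} (hc : 0 < c) :
    Integrable (fun v : E => rexp (-(c * ‖v‖ ^ 2))) := by
  refine (GaussianFourier.integrable_cexp_neg_mul_sq_norm_add (V := E) (b := c)
    (by simpa using hc) 0 0).norm.congr (Filter.Eventually.of_forall fun v => ?_)
  simp [Complex.norm_exp, ← Complex.ofReal_pow]

lemma integrable_norm_mul_exp_neg_mul_sq_norm {c : ℝ} (hc : 0 < c) :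
    Integrable (fun v : E => ‖v‖ * rexp (-(c * ‖v‖ ^ 2))) := by
  refine ((integrable_exp_neg_mul_sq_norm (E := E) (half_pos hc)).const_mul
    (rexp (c / 2) / c)).mono' (by fun_prop) (Filter.Eventually.of_forall fun v => ?_)
  have hsplit : rexp (-(c * ‖v‖ ^ 2)) = rexp (-(c / 2 * ‖v‖ ^ 2)) * rexp (-(c / 2 * ‖v‖ ^ 2)) := by
    rw [← Real.exp_add]; ring_nf
  rw [Real.norm_of_nonneg (by positivity), hsplit, ← mul_assoc]
  gcongr
  exact (Real.mul_exp_neg_mul_sq_le (half_pos hc)).trans_eq (by congr 1; ring)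

lemma norm_integral_inner_sub_mul_le {ω u : E} (hω : ‖ω‖ ≤ 1) {c K : ℝ} (hc : 0 < c)
    {φ : E → ℝ} (hφ : ∀ v, |φ v| ≤ K * rexp (-(c * ‖v‖ ^ 2))) :
    ‖∫ v, ⟪ω, v - u⟫ * φ v‖ ≤
      K * ((∫ v : E, ‖v‖ * rexp (-(c * ‖v‖ ^ 2))) + ‖u‖ * ∫ v : E, rexp (-(c * ‖v‖ ^ 2))) := by
  have hdom : ∀ v, ‖⟪ω, v - u⟫ * φ v‖ ≤
      K * (‖v‖ * rexp (-(c * ‖v‖ ^ 2))) + K * ‖u‖ * rexp (-(c * ‖v‖ ^ 2)) := by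
    intro v
    have hinner : |⟪ω, v - u⟫| ≤ ‖v‖ + ‖u‖ :=
      calc |⟪ω, v - u⟫| ≤ ‖ω‖ * ‖v - u‖ := abs_real_inner_le_norm _ _
        _ ≤ 1 * (‖v‖ + ‖u‖) := by gcongr; exact norm_sub_le _ _
        _ = ‖v‖ + ‖u‖ := one_mul _
    calc ‖⟪ω, v - u⟫ * φ v‖ = |⟪ω, v - u⟫| * |φ v| := by rw [norm_mul, Real.norm_eq_abs]; rfl
      _ ≤ (‖v‖ + ‖u‖) * (K * rexp (-(c * ‖v‖ ^ 2))) := by gcongr; exact hφ v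
      _ = _ := by ring
  calc ‖∫ v, ⟪ω, v - u⟫ * φ v‖
      ≤ ∫ v, (K * (‖v‖ * rexp (-(c * ‖v‖ ^ 2))) + K * ‖u‖ * rexp (-(c * ‖v‖ ^ 2))) :=
        norm_integral_le_of_norm_le (((integrable_norm_mul_exp_neg_mul_sq_norm hc).const_mul K).add
          ((integrable_exp_neg_mul_sq_norm hc).const_mul _)) (Filter.Eventually.of_forall hdom)
    _ = _ := by
        rw [integral_add (((integrable_norm_mul_exp_neg_mul_sq_norm hc).const_mul K))
          ((integrable_exp_neg_mul_sq_norm hc).const_mul _), integral_const_mul,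
          integral_const_mul]
        ring

end GaussianMoments

/-- The Maxwellian `M_β^{⊗j}`. -/
def maxwellian (β : ℝ) (j : ℕ) (z : Phase j) : ℝ :=
  ((β / (2 * π)) ^ ((3 : ℝ) / 2)) ^ j * rexp (-(β * ∑ i, ‖(z i).2‖ ^ 2 / 2))

lemma maxwellian_pos {β : ℝ} (hβ : 0 < β) (j : ℕ) (z : Phase j) : 0 < maxwellian β j z := by
  unfold maxwellian; positivity

lemma maxwellian_snoc (β : ℝ) (j : ℕ) (z : Phase j) (w : V3 × V3) :
    maxwellian β (j + 1) (Fin.snoc z w) =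
      (β / (2 * π)) ^ ((3 : ℝ) / 2) * maxwellian β j z * rexp (-(β / 2 * ‖w.2‖ ^ 2)) := by
  simp only [maxwellian, Fin.sum_univ_castSucc, Fin.snoc_castSucc, Fin.snoc_last]
  rw [pow_succ _ j, show -(β * (∑ i, ‖(z i).2‖ ^ 2 / 2 + ‖w.2‖ ^ 2 / 2)) =
    -(β * ∑ i, ‖(z i).2‖ ^ 2 / 2) + -(β / 2 * ‖w.2‖ ^ 2) by ring, Real.exp_add]
  ring

lemma maxwellian_eq_mul_maxwellian {β β' : ℝ} (hβ : 0 ≤ β) (hβ' : 0 < β') (j : ℕ) (z : Phase j) :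
    maxwellian β j z = ((β / β') ^ ((3 : ℝ) / 2)) ^ j *
      rexp (-((β - β') * ∑ i, ‖(z i).2‖ ^ 2 / 2)) * maxwellian β' j z := by
  have hbase : (β / β') ^ ((3 : ℝ) / 2) * (β' / (2 * π)) ^ ((3 : ℝ) / 2) =
      (β / (2 * π)) ^ ((3 : ℝ) / 2) := by
    rw [← Real.mul_rpow (by positivity) (by positivity)]
    congr 1
    field_simp
  rw [maxwellian, maxwellian, ← hbase, mul_pow,
    show -(β * ∑ i, ‖(z i).2‖ ^ 2 / 2) =
      -((β - β') * ∑ i, ‖(z i).2‖ ^ 2 / 2) + -(β' * ∑ i, ‖(z i).2‖ ^ 2 / 2) by ring,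
    Real.exp_add]
  ring

lemma wnorm_eq_iSup_div_maxwellian {β : ℝ} (hβ : 0 ≤ β) (j : ℕ) (f : Phase j → ℝ) :
    wnorm β j f = ⨆ z, ENNReal.ofReal (|f z| / maxwellian β j z) := by
  refine iSup_congr fun z => congrArg ENNReal.ofReal ?_
  rw [maxwellian, Real.rpow_neg (by positivity), ← Real.rpow_natCast,
    ← Real.rpow_mul (by positivity), Real.exp_neg]
  field_simp

lemma abs_le_toReal_wnorm_mul_maxwellian {β : ℝ} (hβ : 0 < β) {j : ℕ} {f : Phase j → ℝ}
    (hf : wnorm β j f ≠ ⊤) (z : Phase j) :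
    |f z| ≤ (wnorm β j f).toReal * maxwellian β j z := by
  have hz : ENNReal.ofReal (|f z| / maxwellian β j z) ≤ wnorm β j f := by
    rw [wnorm_eq_iSup_div_maxwellian hβ.le]
    exact le_iSup (fun z => ENNReal.ofReal (|f z| / maxwellian β j z)) z
  exact (div_le_iff₀ (maxwellian_pos hβ j z)).1 ((ENNReal.ofReal_le_iff_le_toReal hf).1 hz)

lemma wnorm_le_ofReal {β B : ℝ} (hβ : 0 < β) {j : ℕ} {f : Phase j → ℝ}
    (hf : ∀ z, |f z| ≤ B * maxwellian β j z) : wnorm β j f ≤ ENNReal.ofReal B := by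
  rw [wnorm_eq_iSup_div_maxwellian hβ.le]
  exact iSup_le fun z => ENNReal.ofReal_le_ofReal ((div_le_iff₀ (maxwellian_pos hβ j z)).2 (hf z))

lemma abs_le_pow_mul_toReal_seqNorm_mul_maxwellian {b β : ℝ} (hb : 0 < b) (hβ : 0 < β)
    {f : (k : ℕ) → Phase k → ℝ} (hf : seqNorm b β f ≠ ⊤) {k : ℕ} (hk : 1 ≤ k) (w : Phase k) :
    |f k w| ≤ b ^ k * (seqNorm b β f).toReal * maxwellian β k w := by
  have hle : ENNReal.ofReal (b ^ (-(k : ℝ))) * wnorm β k (f k) ≤ seqNorm b β f :=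
    le_iSup₂ (f := fun (k : ℕ) (_ : 1 ≤ k) => ENNReal.ofReal (b ^ (-(k : ℝ))) * wnorm β k (f k))
      k hk
  have hbk : 0 < b ^ (-(k : ℝ)) := Real.rpow_pos_of_pos hb _
  have hfk : wnorm β k (f k) ≠ ⊤ := fun htop => hf <| top_le_iff.1 <|
    hle.trans_eq' (by rw [htop, ENNReal.mul_top (ENNReal.ofReal_pos.2 hbk).ne'])
  have hreal := ENNReal.toReal_mono hf hle
  rw [ENNReal.toReal_mul, ENNReal.toReal_ofReal hbk.le, Real.rpow_neg hb.le,
    Real.rpow_natCast, inv_mul_le_iff₀ (by positivity)] at hreal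
  exact (abs_le_toReal_wnorm_mul_maxwellian hβ hfk w).trans
    (mul_le_mul_of_nonneg_right hreal (maxwellian_pos hβ k w).le)

instance : IsFiniteMeasure sphereMeasure :=
  inferInstanceAs (IsFiniteMeasure (volume : Measure V3).toSphere)

lemma abs_collHS_le {N : ℕ} {j : ℕ} (hjN : j ≤ N) (ε : ℝ) {β A : ℝ} (hβ : 0 < β)
    {g : Phase (j + 1) → ℝ} (hg : ∀ w, |g w| ≤ A * maxwellian β (j + 1) w) (z : Phase j) :
    |collHS N ε j g z| ≤ (N - j) * ε ^ 2 * sphereMeasure.real Set.univ *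
      (A * (β / (2 * π)) ^ ((3 : ℝ) / 2) * maxwellian β j z) *
      ∑ i, ((∫ v : V3, ‖v‖ * rexp (-(β / 2 * ‖v‖ ^ 2))) +
        ‖(z i).2‖ * ∫ v : V3, rexp (-(β / 2 * ‖v‖ ^ 2))) := by
  set I₀ := ∫ v : V3, rexp (-(β / 2 * ‖v‖ ^ 2))
  set I₁ := ∫ v : V3, ‖v‖ * rexp (-(β / 2 * ‖v‖ ^ 2))
  set K := A * (β / (2 * π)) ^ ((3 : ℝ) / 2) * maxwellian β j z
  have hNj : (0 : ℝ) ≤ N - j := sub_nonneg.2 (by exact_mod_cast hjN)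
  have hterm : ∀ i, ‖∫ ω : sphere (0 : V3) 1, ∫ v : V3,
      ⟪(ω : V3), v - (z i).2⟫ * g (Fin.snoc z ((z i).1 + ε • (ω : V3), v)) ∂volume ∂sphereMeasure‖
      ≤ K * (I₁ + ‖(z i).2‖ * I₀) * sphereMeasure.real Set.univ := by
    refine fun i => norm_integral_le_of_norm_le_const (Filter.Eventually.of_forall fun ω => ?_)
    refine norm_integral_inner_sub_mul_le (norm_eq_of_mem_sphere ω).le (half_pos hβ) fun v => ?_
    refine (hg _).trans_eq ?_
    rw [maxwellian_snoc]
    ring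
  calc |collHS N ε j g z|
      ≤ (N - j) * ε ^ 2 * ∑ i, K * (I₁ + ‖(z i).2‖ * I₀) * sphereMeasure.real Set.univ := by
        rw [collHS, abs_mul, abs_of_nonneg (by positivity)]
        exact mul_le_mul_of_nonneg_left ((Finset.abs_sum_le_sum_abs _ _).trans
          (Finset.sum_le_sum fun i _ => hterm i)) (by positivity)
    _ = _ := by rw [Finset.mul_sum, Finset.mul_sum]; exact Finset.sum_congr rfl fun i _ => by ring

/-- The factor `e^{δ/2}/δ`, `δ = β - β'`, bounds `|vᵢ| e^{-δ|vᵢ|²/2}`: it absorbs the `|vᵢ|` of the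
cross-section `ω·(v - vᵢ)`. -/
def collisionConst (β β' : ℝ) : ℝ :=
  sphereMeasure.real Set.univ * (β / (2 * π)) ^ ((3 : ℝ) / 2) *
    ((∫ v : V3, ‖v‖ * rexp (-(β / 2 * ‖v‖ ^ 2))) +
      (∫ v : V3, rexp (-(β / 2 * ‖v‖ ^ 2))) * (rexp ((β - β') / 2) / (β - β')))

lemma collisionConst_nonneg {β β' : ℝ} (hβ₀ : 0 ≤ β) (hβ : β' < β) :
    0 ≤ collisionConst β β' := by
  have hδ : 0 ≤ β - β' := (sub_pos.2 hβ).le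
  have h₀ : 0 ≤ ∫ v : V3, rexp (-(β / 2 * ‖v‖ ^ 2)) := integral_nonneg fun v => by positivity
  have h₁ : 0 ≤ ∫ v : V3, ‖v‖ * rexp (-(β / 2 * ‖v‖ ^ 2)) :=
    integral_nonneg fun v => by positivity
  exact mul_nonneg (mul_nonneg measureReal_nonneg (by positivity))
    (add_nonneg h₁ (mul_nonneg h₀ (div_nonneg (by positivity) hδ)))

lemma abs_collHS_le_mul_maxwellian {N j : ℕ} (hjN : j ≤ N) (ε : ℝ) {β β' A : ℝ} (hβ' : 0 < β')
    (hβ : β' < β) (hA : 0 ≤ A) {g : Phase (j + 1) → ℝ}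
    (hg : ∀ w, |g w| ≤ A * maxwellian β (j + 1) w) (z : Phase j) :
    |collHS N ε j g z| ≤
      N * ε ^ 2 * A * (collisionConst β β' * j * ((β / β') ^ ((3 : ℝ) / 2)) ^ j) *
        maxwellian β' j z := by
  have hβ₀ : 0 < β := hβ'.trans hβ
  set I₀ := ∫ v : V3, rexp (-(β / 2 * ‖v‖ ^ 2))
  set I₁ := ∫ v : V3, ‖v‖ * rexp (-(β / 2 * ‖v‖ ^ 2))
  set σa := sphereMeasure.real Set.univ * (β / (2 * π)) ^ ((3 : ℝ) / 2)
  have hI₀ : 0 ≤ I₀ := integral_nonneg fun v => by positivity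
  have hI₁ : 0 ≤ I₁ := integral_nonneg fun v => by positivity
  have hsum := Finset.univ.sum_mul_exp_neg_sum_sq_le hI₁ hI₀ (sub_pos.2 hβ)
    (r := fun i => ‖(z i).2‖) fun i _ => norm_nonneg _
  rw [Finset.card_univ, Fintype.card_fin] at hsum
  calc |collHS N ε j g z|
      ≤ (N - j) * ε ^ 2 * sphereMeasure.real Set.univ *
          (A * (β / (2 * π)) ^ ((3 : ℝ) / 2) * maxwellian β j z) *
          ∑ i, (I₁ + ‖(z i).2‖ * I₀) := abs_collHS_le hjN ε hβ₀ hg z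
    _ = (N - j) * ε ^ 2 * A * (σa * ((β / β') ^ ((3 : ℝ) / 2)) ^ j) *
          ((∑ i, (I₁ + ‖(z i).2‖ * I₀)) * rexp (-((β - β') * ∑ i, ‖(z i).2‖ ^ 2 / 2))) *
          maxwellian β' j z := by
        rw [maxwellian_eq_mul_maxwellian hβ₀.le hβ']; ring
    _ ≤ N * ε ^ 2 * A * (σa * ((β / β') ^ ((3 : ℝ) / 2)) ^ j) *
          (j * (I₁ + I₀ * (rexp ((β - β') / 2) / (β - β')))) * maxwellian β' j z := by
        have := maxwellian_pos hβ' j z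
        gcongr
        exact sub_le_self _ (Nat.cast_nonneg j)
    _ = _ := by unfold collisionConst; ring

lemma exists_nat_mul_geom_le {K p b b' : ℝ} (hK : 0 ≤ K) (hp : 0 < p) (hb : 0 < b)
    (hb' : p * b < b') : ∃ C, 0 < C ∧ ∀ j : ℕ, K * j * p ^ j * b ^ (j + 1) * (b' ^ j)⁻¹ ≤ C := by
  have hb'₀ : 0 < b' := (mul_pos hp hb).trans hb'
  have hq₀ : 0 < p * b / b' := by positivity
  have hq₁ : p * b / b' < 1 := (div_lt_one hb'₀).2 hb'
  have hlog : 0 ≤ (Real.log (p * b / b')⁻¹)⁻¹ :=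
    inv_nonneg.2 (Real.log_nonneg ((one_le_inv₀ hq₀).2 hq₁.le))
  refine ⟨K * b * (Real.log (p * b / b')⁻¹)⁻¹ + 1, by positivity, fun j => ?_⟩
  calc K * j * p ^ j * b ^ (j + 1) * (b' ^ j)⁻¹ = K * b * (j * (p * b / b') ^ j) := by
        rw [div_pow, mul_pow, pow_succ]; field_simp
    _ ≤ K * b * (Real.log (p * b / b')⁻¹)⁻¹ := by
        gcongr; exact Real.nat_mul_pow_le_inv_log hq₀ hq₁ j
    _ ≤ K * b * (Real.log (p * b / b')⁻¹)⁻¹ + 1 := le_add_of_nonneg_right zero_le_one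

/-- Sequence-space boundedness of the hard-sphere BBGKY collision operators: there is a
constant `C > 0`, depending only on `β, β', b, b'` (not on `N`, `ε`, `j`), such that
`sup_{1 ≤ j ≤ N−1} b'^{-j} ‖C̃^ε_{j+1} f_{j+1}‖_{j,β'} ≤ C N ε² ‖f‖_{b,β}`. -/
theorem collHS_seq_bound (β β' b b' : ℝ) (hβ' : 0 < β') (hβ : β' < β)
    (hb : 0 < b) (hb' : (β / β') ^ ((3 : ℝ) / 2) * b < b') :
    ∃ C : ℝ, 0 < C ∧
      ∀ (N : ℕ), 1 ≤ N → ∀ (ε : ℝ), 0 < ε →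
        ∀ (f : (k : ℕ) → Phase k → ℝ), (∀ k, Measurable (f k)) →
          seqNorm b β f < ⊤ →
          ∀ j : ℕ, 1 ≤ j → j ≤ N - 1 →
            ENNReal.ofReal (b' ^ (-(j : ℝ))) * wnorm β' j (collHS N ε j (f (j + 1))) ≤
              ENNReal.ofReal (C * N * ε ^ 2) * seqNorm b β f := by
  have hβ₀ : 0 < β := hβ'.trans hβ
  set K := collisionConst β β'
  set p := (β / β') ^ ((3 : ℝ) / 2)
  have hb'₀ : 0 < b' := lt_of_le_of_lt (by positivity) hb'
  -- The geometric gain `(p b / b')^j` absorbs the factor `j` coming from the sum over particles.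
  obtain ⟨C, hC₀, hC⟩ :=
    exists_nat_mul_geom_le (collisionConst_nonneg hβ₀.le hβ) (by positivity) hb hb'
  refine ⟨C, hC₀, fun N _ ε _ f _ hS j hj hjN => ?_⟩
  set s := (seqNorm b β f).toReal
  have hg := abs_le_pow_mul_toReal_seqNorm_mul_maxwellian hb hβ₀ hS.ne (by omega : 1 ≤ j + 1)
  have hw := wnorm_le_ofReal hβ'
    (abs_collHS_le_mul_maxwellian (show j ≤ N by omega) ε hβ' hβ (by positivity) hg)
  calc ENNReal.ofReal (b' ^ (-(j : ℝ))) * wnorm β' j (collHS N ε j (f (j + 1)))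
      ≤ ENNReal.ofReal (b' ^ (-(j : ℝ))) *
          ENNReal.ofReal (N * ε ^ 2 * (b ^ (j + 1) * s) * (K * j * p ^ j)) := by gcongr
    _ = ENNReal.ofReal (N * ε ^ 2 * s * (K * j * p ^ j * b ^ (j + 1) * (b' ^ j)⁻¹)) := by
        rw [← ENNReal.ofReal_mul (by positivity), Real.rpow_neg hb'₀.le, Real.rpow_natCast]
        ring_nf
    _ ≤ ENNReal.ofReal (C * N * ε ^ 2 * s) :=
        ENNReal.ofReal_le_ofReal (by nlinarith [hC j, show 0 ≤ N * ε ^ 2 * s by positivity])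
    _ = ENNReal.ofReal (C * N * ε ^ 2) * seqNorm b β f := by
        rw [ENNReal.ofReal_mul (by positivity), ENNReal.ofReal_toReal hS.ne]
end
end

section
/- Weighted-norm bound for the Boltzmann hierarchy collision operator: Let j ≥ 1 and β > β' > 0. There exists a constant c_β > 0, depending only on β (and not on j or β'), such that for every measurable g : (ℝ³×ℝ³)^{j+1} → ℝ with ‖g‖_{j+1,β} < ∞, the function C_{j+1} g is well defined and satisfies ‖C_{j+1} g‖_{j,β'} ≤ c_β (β/β')^{3j/2} [ √j / √(β−β') + j ] ‖g‖_{j+1,β}. -/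
/-!
Both collision maps conserve kinetic energy, so the weighted bound on `g` controls the integrand
of `C^±_{k,j+1} g` at `z` by `e^{-β E(z)} (|v_k| + |v|) e^{-β|v|²/2}`. Integrating over `ω` and `v`
costs a factor `|S²| (|v_k| m₀ + m₁)`, with `m₀, m₁` the first two moments of that Gaussian.
Summing over `k` and changing the weight from `β` to `β'` leaves `e^{-(β-β') E(z)} Σ_k |v_k|`,
which is at most `√j / √(β-β')` by Cauchy–Schwarz and `y ≤ e^{y²/2}`.
-/

open MeasureTheory Real Metric
open scoped ENNReal RealInnerProductSpace

noncomputable section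

/-- The gain part `C⁺_{k,j+1}` of the Boltzmann hierarchy collision operator. -/
def collGain (j : ℕ) (k : Fin j) (g : Phase (j + 1) → ℝ) (z : Phase j) : ℝ :=
  ∫ ω : sphere (0 : V3) 1, ∫ v : V3,
    (if 0 ≤ ⟪(ω : V3), (z k).2 - v⟫ then
      ⟪(ω : V3), (z k).2 - v⟫ *
        g (Fin.snoc
            (Function.update z k
              ((z k).1, (z k).2 - ⟪(z k).2 - v, (ω : V3)⟫ • (ω : V3)))
            ((z k).1, v + ⟪(z k).2 - v, (ω : V3)⟫ • (ω : V3)))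
    else 0) ∂volume ∂sphereMeasure

/-- The loss part `C⁻_{k,j+1}` of the Boltzmann hierarchy collision operator. -/
def collLoss (j : ℕ) (k : Fin j) (g : Phase (j + 1) → ℝ) (z : Phase j) : ℝ :=
  ∫ ω : sphere (0 : V3) 1, ∫ v : V3,
    (if 0 ≤ ⟪(ω : V3), (z k).2 - v⟫ then
      ⟪(ω : V3), (z k).2 - v⟫ * g (Fin.snoc z ((z k).1, v))
    else 0) ∂volume ∂sphereMeasure

/-- The Boltzmann hierarchy collision operator `C_{j+1} = Σ_k (C⁺_{k,j+1} − C⁻_{k,j+1})`. -/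
def collB (j : ℕ) (g : Phase (j + 1) → ℝ) : Phase j → ℝ :=
  fun z => ∑ k : Fin j, (collGain j k g z - collLoss j k g z)

lemma le_exp_sq_div_two (y : ℝ) : y ≤ exp (y ^ 2 / 2) := by
  rcases le_or_gt y 0 with hy | hy
  · exact hy.trans (exp_pos _).le
  · nlinarith [add_one_le_exp (y ^ 2 / 2)]

lemma sqrt_mul_exp_neg_le {s l : ℝ} (hs : 0 ≤ s) (hl : 0 < l) :
    √s * exp (-(l * s / 2)) ≤ 1 / √l := by
  have h := le_exp_sq_div_two √(l * s)
  rw [sq_sqrt (by positivity), sqrt_mul hl.le] at h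
  rw [le_div_iff₀ (sqrt_pos.2 hl), exp_neg, mul_right_comm, ← div_eq_mul_inv,
    div_le_one (exp_pos _), mul_comm]
  exact h

lemma sum_abs_mul_exp_neg_le {ι : Type*} [Fintype ι] (x : ι → ℝ) {l : ℝ} (hl : 0 < l) :
    (∑ i, |x i|) * exp (-(l * ∑ i, x i ^ 2 / 2)) ≤ √(Fintype.card ι) / √l := by
  have hCS : ∑ i, |x i| ≤ √(Fintype.card ι) * √(∑ i, x i ^ 2) := by
    rw [← sqrt_mul (Nat.cast_nonneg _)]
    refine le_sqrt_of_sq_le ?_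
    simpa [sq_abs] using sq_sum_le_card_mul_sum_sq (s := Finset.univ) (f := fun i => |x i|)
  have hsq : 0 ≤ ∑ i, x i ^ 2 := by positivity
  calc (∑ i, |x i|) * exp (-(l * ∑ i, x i ^ 2 / 2))
      ≤ √(Fintype.card ι) * (√(∑ i, x i ^ 2) * exp (-(l * (∑ i, x i ^ 2) / 2))) := by
        rw [← Finset.sum_div, mul_div_assoc, ← mul_assoc]
        gcongr
    _ ≤ √(Fintype.card ι) * (1 / √l) := by gcongr; exact sqrt_mul_exp_neg_le hsq hl
    _ = √(Fintype.card ι) / √l := mul_one_div _ _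

section Gaussian

variable {E : Type*} [NormedAddCommGroup E] [MeasurableSpace E]

def gaussMoment (μ : Measure E) (n : ℕ) (b : ℝ) : ℝ :=
  ∫ v, ‖v‖ ^ n * exp (-(b * ‖v‖ ^ 2)) ∂μ

lemma integrable_norm_pow_mul_exp_neg_mul_sq_norm [NormedSpace ℝ E] [FiniteDimensional ℝ E]
    [BorelSpace E] [Nontrivial E] (μ : Measure E)
    [μ.IsAddHaarMeasure] (n : ℕ) {b : ℝ} (hb : 0 < b) :
    Integrable (fun v => ‖v‖ ^ n * exp (-(b * ‖v‖ ^ 2))) μ := by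
  refine (integrable_fun_norm_addHaar μ (f := fun y => y ^ n * exp (-(b * y ^ 2)))).2 ?_
  have hs : (-1 : ℝ) < (Module.finrank ℝ E - 1 + n : ℕ) :=
    neg_one_lt_zero.trans_le (Nat.cast_nonneg _)
  refine (integrableOn_rpow_mul_exp_neg_mul_sq hb hs).congr_fun (fun y _ => ?_) measurableSet_Ioi
  simp only [rpow_natCast, pow_add, smul_eq_mul, neg_mul, mul_assoc]

lemma gaussMoment_nonneg (μ : Measure E) (n : ℕ) (b : ℝ) : 0 ≤ gaussMoment μ n b :=
  integral_nonneg fun _ => by positivity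

end Gaussian

lemma gaussMoment_zero_pos {E : Type*} [NormedAddCommGroup E] [InnerProductSpace ℝ E]
    [FiniteDimensional ℝ E] [MeasurableSpace E] [BorelSpace E] {b : ℝ} (hb : 0 < b) :
    0 < gaussMoment (volume : Measure E) 0 b := by
  simp only [gaussMoment, pow_zero, one_mul, ← neg_mul]
  rw [GaussianFourier.integral_rexp_neg_mul_sq_norm hb]
  positivity

section CollisionIntegrand

variable {E : Type*} [NormedAddCommGroup E] [InnerProductSpace ℝ E]

-- The integrand of `C^±_{k,j+1}` in `p = (ω, v_{j+1})`, with `u = v_k` and `F p` the value of `g`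
-- at the pre- or post-collision configuration.
def collIntegrand (u : E) (F : sphere (0 : E) 1 × E → ℝ) (p : sphere (0 : E) 1 × E) : ℝ :=
  if 0 ≤ ⟪(p.1 : E), u - p.2⟫ then ⟪(p.1 : E), u - p.2⟫ * F p else 0

variable {u : E} {F : sphere (0 : E) 1 × E → ℝ} {K b : ℝ}

lemma abs_collIntegrand_le (hF : ∀ p, |F p| ≤ K * exp (-(b * ‖p.2‖ ^ 2)))
    (p : sphere (0 : E) 1 × E) :
    |collIntegrand u F p| ≤ K * ((‖u‖ + ‖p.2‖) * exp (-(b * ‖p.2‖ ^ 2))) := by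
  have hK : 0 ≤ K := nonneg_of_mul_nonneg_left ((abs_nonneg _).trans (hF p)) (exp_pos _)
  unfold collIntegrand
  split_ifs
  · have hspeed : |⟪(p.1 : E), u - p.2⟫| ≤ ‖u‖ + ‖p.2‖ := by
      grw [abs_real_inner_le_norm, norm_eq_of_mem_sphere p.1, one_mul, norm_sub_le]
    rw [abs_mul]
    calc |⟪(p.1 : E), u - p.2⟫| * |F p| ≤ (‖u‖ + ‖p.2‖) * (K * exp (-(b * ‖p.2‖ ^ 2))) := by
          gcongr
          exact hF p
      _ = _ := by ring
  · rw [abs_zero]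
    positivity

variable [MeasurableSpace E] [BorelSpace E] [FiniteDimensional ℝ E]

lemma measurable_collIntegrand (hF : Measurable F) : Measurable (collIntegrand u F) := by
  have hspeed : Measurable fun p : sphere (0 : E) 1 × E => ⟪(p.1 : E), u - p.2⟫ := by
    fun_prop
  exact Measurable.ite (measurableSet_le measurable_const hspeed) (hspeed.mul hF)
    measurable_const

variable [Nontrivial E] (μ : Measure E) [μ.IsAddHaarMeasure]
  (ν : Measure (sphere (0 : E) 1)) [IsFiniteMeasure ν]

lemma integrable_speed_mul_gaussian (hb : 0 < b) :
    Integrable (fun v : E => (‖u‖ + ‖v‖) * exp (-(b * ‖v‖ ^ 2))) μ := by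
  have h0 := (integrable_norm_pow_mul_exp_neg_mul_sq_norm μ 0 hb).const_mul ‖u‖
  have h1 := integrable_norm_pow_mul_exp_neg_mul_sq_norm μ 1 hb
  refine (h0.add h1).congr (ae_of_all _ fun v => ?_)
  simp only [Pi.add_apply]
  ring

lemma integral_speed_mul_gaussian (hb : 0 < b) :
    ∫ v, (‖u‖ + ‖v‖) * exp (-(b * ‖v‖ ^ 2)) ∂μ = ‖u‖ * gaussMoment μ 0 b + gaussMoment μ 1 b := by
  have h0 := integrable_norm_pow_mul_exp_neg_mul_sq_norm μ 0 hb
  have h1 := integrable_norm_pow_mul_exp_neg_mul_sq_norm μ 1 hb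
  simp only [gaussMoment, ← integral_const_mul, ← integral_add (h0.const_mul _) h1]
  congr 1 with v
  ring

lemma integrable_collIntegrand (hFm : Measurable F) (hb : 0 < b)
    (hF : ∀ p, |F p| ≤ K * exp (-(b * ‖p.2‖ ^ 2))) :
    Integrable (collIntegrand u F) (ν.prod μ) :=
  (((integrable_speed_mul_gaussian μ hb).comp_snd ν).const_mul K).mono'
    (measurable_collIntegrand hFm).aestronglyMeasurable
    (ae_of_all _ (abs_collIntegrand_le hF))

lemma abs_integral_collIntegrand_le (hFm : Measurable F) (hb : 0 < b)
    (hF : ∀ p, |F p| ≤ K * exp (-(b * ‖p.2‖ ^ 2))) :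
    |∫ p, collIntegrand u F p ∂(ν.prod μ)|
      ≤ K * (ν.real Set.univ * (‖u‖ * gaussMoment μ 0 b + gaussMoment μ 1 b)) := by
  calc |∫ p, collIntegrand u F p ∂(ν.prod μ)|
      ≤ ∫ p, K * ((‖u‖ + ‖p.2‖) * exp (-(b * ‖p.2‖ ^ 2))) ∂(ν.prod μ) :=
        abs_integral_le_integral_abs.trans <| integral_mono
          (integrable_collIntegrand μ ν hFm hb hF).abs
          (((integrable_speed_mul_gaussian μ hb).comp_snd ν).const_mul K)
          (abs_collIntegrand_le hF)
    _ = _ := by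
        rw [integral_const_mul, integral_fun_snd (fun v => (‖u‖ + ‖v‖) * exp (-(b * ‖v‖ ^ 2))),
          integral_speed_mul_gaussian μ hb, smul_eq_mul]

end CollisionIntegrand

lemma norm_sub_inner_smul_sq_add_norm_add_inner_smul_sq {E : Type*} [NormedAddCommGroup E]
    [InnerProductSpace ℝ E] (u v ω : E) (hω : ‖ω‖ = 1) :
    ‖u - ⟪u - v, ω⟫ • ω‖ ^ 2 + ‖v + ⟪u - v, ω⟫ • ω‖ ^ 2 = ‖u‖ ^ 2 + ‖v‖ ^ 2 := by
  rw [norm_sub_sq_real, norm_add_sq_real, norm_smul, real_inner_smul_right,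
    real_inner_smul_right, hω, inner_sub_left]
  simp only [Real.norm_eq_abs, mul_one, sq_abs]
  ring

def kineticEnergy {j : ℕ} (z : Phase j) : ℝ := ∑ i, ‖(z i).2‖ ^ 2 / 2

lemma kineticEnergy_snoc {j : ℕ} (z : Phase j) (a : V3 × V3) :
    kineticEnergy (Fin.snoc z a : Phase (j + 1)) = kineticEnergy z + ‖a.2‖ ^ 2 / 2 := by
  simp [kineticEnergy, Fin.sum_univ_castSucc]

lemma kineticEnergy_update {j : ℕ} (z : Phase j) (k : Fin j) (a : V3 × V3) :
    kineticEnergy (Function.update z k a)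
      = kineticEnergy z - ‖(z k).2‖ ^ 2 / 2 + ‖a.2‖ ^ 2 / 2 := by
  simp only [kineticEnergy, ← Finset.add_sum_erase _ _ (Finset.mem_univ k),
    Function.update_self]
  rw [Finset.sum_congr rfl fun i hi => by rw [Function.update_of_ne (Finset.ne_of_mem_erase hi)]]
  ring

section Collision

variable {j : ℕ} (z : Phase j) (k : Fin j)

def gainConfig (p : sphere (0 : V3) 1 × V3) : Phase (j + 1) :=
  Fin.snoc
    (Function.update z k ((z k).1, (z k).2 - ⟪(z k).2 - p.2, (p.1 : V3)⟫ • (p.1 : V3)))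
    ((z k).1, p.2 + ⟪(z k).2 - p.2, (p.1 : V3)⟫ • (p.1 : V3))

def lossConfig (p : sphere (0 : V3) 1 × V3) : Phase (j + 1) :=
  Fin.snoc z ((z k).1, p.2)

lemma measurable_gainConfig : Measurable (gainConfig z k) := by
  unfold gainConfig
  fun_prop

lemma measurable_lossConfig : Measurable (lossConfig z k) := by
  unfold lossConfig
  fun_prop

lemma kineticEnergy_gainConfig (p : sphere (0 : V3) 1 × V3) :
    kineticEnergy (gainConfig z k p) = kineticEnergy z + ‖p.2‖ ^ 2 / 2 := by
  have hω := norm_sub_inner_smul_sq_add_norm_add_inner_smul_sq (z k).2 p.2 p.1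
    (norm_eq_of_mem_sphere p.1)
  rw [gainConfig, kineticEnergy_snoc, kineticEnergy_update]
  linarith

lemma kineticEnergy_lossConfig (p : sphere (0 : V3) 1 × V3) :
    kineticEnergy (lossConfig z k p) = kineticEnergy z + ‖p.2‖ ^ 2 / 2 :=
  kineticEnergy_snoc z _

end Collision

lemma abs_le_wnorm_mul {β : ℝ} (hβ : 0 < β) {j : ℕ} {f : Phase j → ℝ} (hf : wnorm β j f ≠ ⊤)
    (z : Phase j) :
    |f z| ≤ (wnorm β j f).toReal * (β / (2 * π)) ^ (3 * (j : ℝ) / 2)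
      * exp (-(β * kineticEnergy z)) := by
  have hz : |f z| * (β / (2 * π)) ^ (-(3 * (j : ℝ) / 2)) * exp (β * kineticEnergy z)
      ≤ (wnorm β j f).toReal :=
    (ENNReal.ofReal_le_iff_le_toReal hf).1 <| le_iSup (fun z : Phase j => ENNReal.ofReal
      (|f z| * (β / (2 * π)) ^ (-(3 * (j : ℝ) / 2)) * exp (β * ∑ i, ‖(z i).2‖ ^ 2 / 2))) z
  calc |f z| = |f z| * (β / (2 * π)) ^ (-(3 * (j : ℝ) / 2)) * exp (β * kineticEnergy z)
        * ((β / (2 * π)) ^ (3 * (j : ℝ) / 2) * exp (-(β * kineticEnergy z))) := by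
        rw [rpow_neg (by positivity), exp_neg]
        field_simp
    _ ≤ _ := by
        rw [← mul_assoc]
        gcongr

instance inst_s4 : IsFiniteMeasure sphereMeasure := by
  unfold sphereMeasure
  infer_instance

lemma sphereMeasure_real_univ_pos : 0 < sphereMeasure.real Set.univ := by
  rw [measureReal_def, sphereMeasure, Measure.toSphere_apply_univ]
  exact ENNReal.toReal_pos (mul_ne_zero (by simp) (measure_ball_pos _ _ one_pos).ne')
    (ENNReal.mul_ne_top (by simp) measure_ball_lt_top.ne)

section Bounds

variable {j : ℕ} {g : Phase (j + 1) → ℝ} {A β : ℝ}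

lemma abs_comp_le_of_kineticEnergy_eq (hgA : ∀ w, |g w| ≤ A * exp (-(β * kineticEnergy w)))
    {T : sphere (0 : V3) 1 × V3 → Phase (j + 1)} {E₀ : ℝ}
    (hT : ∀ p, kineticEnergy (T p) = E₀ + ‖p.2‖ ^ 2 / 2) (p : sphere (0 : V3) 1 × V3) :
    |(g ∘ T) p| ≤ A * exp (-(β * E₀)) * exp (-(β / 2 * ‖p.2‖ ^ 2)) := by
  rw [mul_assoc, ← exp_add, Function.comp_apply]
  convert hgA (T p) using 3
  rw [hT p]
  ring

variable (hg : Measurable g) (hβ : 0 < β) (hgA : ∀ w, |g w| ≤ A * exp (-(β * kineticEnergy w)))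
  (z : Phase j) (k : Fin j)
include hg hβ hgA

lemma integrable_collIntegrand_gainConfig :
    Integrable (collIntegrand (z k).2 (g ∘ gainConfig z k)) (sphereMeasure.prod volume) :=
  integrable_collIntegrand volume sphereMeasure (hg.comp (measurable_gainConfig z k))
    (half_pos hβ) (abs_comp_le_of_kineticEnergy_eq hgA (kineticEnergy_gainConfig z k))

lemma integrable_collIntegrand_lossConfig :
    Integrable (collIntegrand (z k).2 (g ∘ lossConfig z k)) (sphereMeasure.prod volume) :=
  integrable_collIntegrand volume sphereMeasure (hg.comp (measurable_lossConfig z k))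
    (half_pos hβ) (abs_comp_le_of_kineticEnergy_eq hgA (kineticEnergy_lossConfig z k))

lemma abs_collGain_le :
    |collGain j k g z| ≤ A * exp (-(β * kineticEnergy z)) * (sphereMeasure.real Set.univ
        * (‖(z k).2‖ * gaussMoment (volume : Measure V3) 0 (β / 2)
        + gaussMoment (volume : Measure V3) 1 (β / 2))) := by
  change |∫ ω, ∫ v, collIntegrand (z k).2 (g ∘ gainConfig z k) (ω, v) ∂volume ∂sphereMeasure| ≤ _
  rw [← integral_prod _ (integrable_collIntegrand_gainConfig hg hβ hgA z k)]
  exact abs_integral_collIntegrand_le volume sphereMeasure (hg.comp (measurable_gainConfig z k))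
    (half_pos hβ) (abs_comp_le_of_kineticEnergy_eq hgA (kineticEnergy_gainConfig z k))

lemma abs_collLoss_le :
    |collLoss j k g z| ≤ A * exp (-(β * kineticEnergy z)) * (sphereMeasure.real Set.univ
        * (‖(z k).2‖ * gaussMoment (volume : Measure V3) 0 (β / 2)
        + gaussMoment (volume : Measure V3) 1 (β / 2))) := by
  change |∫ ω, ∫ v, collIntegrand (z k).2 (g ∘ lossConfig z k) (ω, v) ∂volume ∂sphereMeasure| ≤ _
  rw [← integral_prod _ (integrable_collIntegrand_lossConfig hg hβ hgA z k)]
  exact abs_integral_collIntegrand_le volume sphereMeasure (hg.comp (measurable_lossConfig z k))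
    (half_pos hβ) (abs_comp_le_of_kineticEnergy_eq hgA (kineticEnergy_lossConfig z k))

omit k in
lemma abs_collB_le :
    |collB j g z| ≤ 2 * A * exp (-(β * kineticEnergy z)) * sphereMeasure.real Set.univ
      * (gaussMoment (volume : Measure V3) 0 (β / 2) * ∑ k, ‖(z k).2‖
        + gaussMoment (volume : Measure V3) 1 (β / 2) * j) := by
  calc |collB j g z| ≤ ∑ k, (|collGain j k g z| + |collLoss j k g z|) :=
        (Finset.abs_sum_le_sum_abs _ _).trans (Finset.sum_le_sum fun k _ => abs_sub _ _)
    _ ≤ ∑ k, 2 * (A * exp (-(β * kineticEnergy z)) * (sphereMeasure.real Set.univ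
          * (‖(z k).2‖ * gaussMoment (volume : Measure V3) 0 (β / 2)
            + gaussMoment (volume : Measure V3) 1 (β / 2)))) :=
        Finset.sum_le_sum fun k _ => by
          linarith [abs_collGain_le hg hβ hgA z k, abs_collLoss_le hg hβ hgA z k]
    _ = _ := by
        simp only [mul_add, Finset.sum_add_distrib, ← Finset.mul_sum, Finset.sum_const,
          Finset.card_univ, Fintype.card_fin, nsmul_eq_mul, ← Finset.sum_mul]
        ring

end Bounds

lemma rpow_add_mul_rpow_neg {x y : ℝ} (hx : 0 < x) (hy : 0 < y) (a b : ℝ) :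
    x ^ (a + b) * y ^ (-b) = x ^ a * (x / y) ^ b := by
  rw [rpow_add hx, div_rpow hx.le hy.le, rpow_neg hy.le, div_eq_mul_inv]
  ring

def collConst (β : ℝ) : ℝ :=
  2 * sphereMeasure.real Set.univ * (β / (2 * π)) ^ ((3 : ℝ) / 2)
    * (gaussMoment (volume : Measure V3) 0 (β / 2) + gaussMoment (volume : Measure V3) 1 (β / 2))

lemma collConst_pos {β : ℝ} (hβ : 0 < β) : 0 < collConst β := by
  have := sphereMeasure_real_univ_pos
  have := gaussMoment_zero_pos (E := V3) (half_pos hβ)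
  have := gaussMoment_nonneg (volume : Measure V3) 1 (β / 2)
  unfold collConst
  positivity

lemma weight_succ_mul_weight_neg {β β' : ℝ} (hβ : 0 < β) (hβ' : 0 < β') (j : ℕ) :
    (β / (2 * π)) ^ (3 * ((j + 1 : ℕ) : ℝ) / 2) * (β' / (2 * π)) ^ (-(3 * (j : ℝ) / 2))
      = (β / (2 * π)) ^ ((3 : ℝ) / 2) * (β / β') ^ (3 * (j : ℝ) / 2) := by
  have h := rpow_add_mul_rpow_neg (x := β / (2 * π)) (y := β' / (2 * π)) (by positivity)
    (by positivity) (3 / 2) (3 * j / 2)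
  rw [div_div_div_cancel_right₀ (by positivity)] at h
  convert h using 3
  push_cast
  ring

lemma abs_collB_mul_weight_le {β β' : ℝ} (hβ' : 0 < β') (hβ'β : β' < β) {j : ℕ}
    {g : Phase (j + 1) → ℝ} (hg : Measurable g) (hgβ : wnorm β (j + 1) g ≠ ⊤) (z : Phase j) :
    |collB j g z| * (β' / (2 * π)) ^ (-(3 * (j : ℝ) / 2)) * exp (β' * kineticEnergy z)
      ≤ collConst β * (β / β') ^ (3 * (j : ℝ) / 2) * (√j / √(β - β') + j)
        * (wnorm β (j + 1) g).toReal := by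
  have hβ : 0 < β := hβ'.trans hβ'β
  set M := (wnorm β (j + 1) g).toReal
  set m₀ := gaussMoment (volume : Measure V3) 0 (β / 2)
  set m₁ := gaussMoment (volume : Measure V3) 1 (β / 2)
  have hm₀ : 0 ≤ m₀ := gaussMoment_nonneg _ _ _
  have hm₁ : 0 ≤ m₁ := gaussMoment_nonneg _ _ _
  have hS := sphereMeasure_real_univ_pos
  have hexp : exp (-(β * kineticEnergy z)) * exp (β' * kineticEnergy z)
      = exp (-((β - β') * kineticEnergy z)) := by
    rw [← exp_add]
    ring_nf
  have hN : (∑ k, ‖(z k).2‖) * exp (-((β - β') * kineticEnergy z)) ≤ √j / √(β - β') := by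
    simpa [abs_norm, kineticEnergy] using
      sum_abs_mul_exp_neg_le (fun k => ‖(z k).2‖) (sub_pos.2 hβ'β)
  have hdecay : exp (-((β - β') * kineticEnergy z)) ≤ 1 :=
    exp_le_one_iff.2 <| neg_nonpos.2 <|
      mul_nonneg (sub_pos.2 hβ'β).le (by unfold kineticEnergy; positivity)
  have hm : m₀ * (√j / √(β - β')) + m₁ * j * 1 ≤ (m₀ + m₁) * (√j / √(β - β') + j) := by
    have : 0 ≤ m₀ * j + m₁ * (√j / √(β - β')) := by positivity
    linarith
  calc |collB j g z| * (β' / (2 * π)) ^ (-(3 * (j : ℝ) / 2)) * exp (β' * kineticEnergy z)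
      ≤ 2 * (M * (β / (2 * π)) ^ (3 * ((j + 1 : ℕ) : ℝ) / 2)) * exp (-(β * kineticEnergy z))
          * sphereMeasure.real Set.univ * (m₀ * ∑ k, ‖(z k).2‖ + m₁ * j)
          * (β' / (2 * π)) ^ (-(3 * (j : ℝ) / 2)) * exp (β' * kineticEnergy z) := by
        gcongr
        exact abs_collB_le hg hβ (abs_le_wnorm_mul hβ hgβ) z
    _ = 2 * sphereMeasure.real Set.univ * M * ((β / (2 * π)) ^ (3 * ((j + 1 : ℕ) : ℝ) / 2)
          * (β' / (2 * π)) ^ (-(3 * (j : ℝ) / 2)))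
          * (m₀ * ((∑ k, ‖(z k).2‖) * exp (-((β - β') * kineticEnergy z)))
            + m₁ * j * exp (-((β - β') * kineticEnergy z))) := by
        rw [← hexp]
        ring
    _ ≤ 2 * sphereMeasure.real Set.univ * M * ((β / (2 * π)) ^ ((3 : ℝ) / 2)
          * (β / β') ^ (3 * (j : ℝ) / 2)) * ((m₀ + m₁) * (√j / √(β - β') + j)) := by
        rw [weight_succ_mul_weight_neg hβ hβ']
        grw [hN, hdecay, hm]
    _ = collConst β * (β / β') ^ (3 * (j : ℝ) / 2) * (√j / √(β - β') + j) * M := by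
        unfold collConst
        ring

/-- Weighted-norm bound for the Boltzmann hierarchy collision operator: there is a
constant `c_β > 0`, depending only on `β`, such that for every `0 < β' < β`, `j ≥ 1`
and `g` with `‖g‖_{j+1,β} < ∞`, `C_{j+1} g` is well defined and
`‖C_{j+1} g‖_{j,β'} ≤ c_β (β/β')^{3j/2} [√j/√(β−β') + j] ‖g‖_{j+1,β}`. -/
theorem collB_bound (β : ℝ) (hβ : 0 < β) :
    ∃ c : ℝ, 0 < c ∧
      ∀ (β' : ℝ), 0 < β' → β' < β →
        ∀ (j : ℕ), 1 ≤ j →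
          ∀ (g : Phase (j + 1) → ℝ), Measurable g → wnorm β (j + 1) g < ⊤ →
            (∀ (z : Phase j) (k : Fin j),
              Integrable
                (fun p : sphere (0 : V3) 1 × V3 =>
                  if 0 ≤ ⟪(p.1 : V3), (z k).2 - p.2⟫ then
                    ⟪(p.1 : V3), (z k).2 - p.2⟫ *
                      g (Fin.snoc
                          (Function.update z k
                            ((z k).1, (z k).2 - ⟪(z k).2 - p.2, (p.1 : V3)⟫ • (p.1 : V3)))
                          ((z k).1, p.2 + ⟪(z k).2 - p.2, (p.1 : V3)⟫ • (p.1 : V3)))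
                  else 0)
                (sphereMeasure.prod volume) ∧
              Integrable
                (fun p : sphere (0 : V3) 1 × V3 =>
                  if 0 ≤ ⟪(p.1 : V3), (z k).2 - p.2⟫ then
                    ⟪(p.1 : V3), (z k).2 - p.2⟫ * g (Fin.snoc z ((z k).1, p.2))
                  else 0)
                (sphereMeasure.prod volume)) ∧
            wnorm β' j (collB j g) ≤
              ENNReal.ofReal (c * (β / β') ^ (3 * (j : ℝ) / 2) *
                  (Real.sqrt j / Real.sqrt (β - β') + j)) *
                wnorm β (j + 1) g := by
  refine ⟨collConst β, collConst_pos hβ, fun β' hβ' hβ'β j _ g hg hgβ => ⟨fun z k => ?_, ?_⟩⟩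
  · have hgA := abs_le_wnorm_mul hβ hgβ.ne
    exact ⟨integrable_collIntegrand_gainConfig hg hβ hgA z k,
      integrable_collIntegrand_lossConfig hg hβ hgA z k⟩
  · have hc := collConst_pos hβ
    rw [← ENNReal.ofReal_toReal hgβ.ne, ← ENNReal.ofReal_mul (by positivity)]
    exact iSup_le fun z => ENNReal.ofReal_le_ofReal (abs_collB_mul_weight_le hβ' hβ'β hg hgβ.ne z)
end
end

section
/- Volume bound for connected cluster configurations (negligibility of multiple collisions): Let ε > 0, let m ≥ 1 be an integer and fix x₀ ∈ ℝ³. Let Δ_m(x₀, ε) ⊂ (ℝ³)^m be the set of (y₁,…,y_m) such that the graph on vertex set {0,1,…,m} (with y₀ := x₀) having an edge between k and l if and only if |y_k − y_l| ≤ ε is connected. Then the Lebesgue measure of Δ_m(x₀,ε) in ℝ^{3m} is at most (m+1)^{m−1} (4π/3)^m ε^{3m}; in particular |Δ_m(x₀,ε)| = O(ε^{3m}) as ε → 0 for fixed m. -/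
/-!
Every configuration in `Δ_m(x₀, ε)` has a spanning tree of its proximity graph rooted at `x₀`
(breadth-first search), so `Δ_m` is covered by the sets of configurations in which each particle
lies within `ε` of its parent in a fixed rooted tree. Such a set is the preimage of a product of
`m` balls of radius `ε` under `y ↦ (y_k - y_{q k})_k`, which up to translation is a unipotent
linear map (the shift along parents is nilpotent); so its volume is `(4π/3 · ε³)^m`. There are
at most `(m+1)^(m-1)` rooted trees on `m + 1` labelled vertices, as Prüfer codes show.
-/

open MeasureTheory Real
open scoped ENNReal

noncomputable section

/-- The set `Δ_m(x₀, ε)` of configurations `(y₁,…,y_m)` such that the graph on the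
vertices `{0,1,…,m}` (with `y₀ := x₀`), having an edge between `k` and `l` iff
`|y_k − y_l| ≤ ε`, is connected. -/
def clusterSet (m : ℕ) (x₀ : V3) (ε : ℝ) : Set (Fin m → V3) :=
  {y | ∀ a b : Fin (m + 1),
    Relation.ReflTransGen
      (fun k l : Fin (m + 1) =>
        ‖(Fin.cons x₀ y : Fin (m + 1) → V3) k - (Fin.cons x₀ y : Fin (m + 1) → V3) l‖ ≤ ε)
      a b}

-- Parent maps of the trees on `α` rooted at `r`.
structure IsParentMap {α : Type*} (r : α) (q : α → α) : Prop where
  map_root : q r = r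
  exists_iterate_eq_root : ∀ v, ∃ n, q^[n] v = r

section ParentMap

variable {α : Type*} {r : α} {q : α → α}

lemma exists_iterate_eq_of_map_lt (d : α → ℕ) (hd : ∀ v, v ≠ r → d (q v) < d v)
    (v : α) : ∃ n, q^[n] v = r := by
  induction hv : d v using Nat.strong_induction_on generalizing v with
  | _ k ih =>
    obtain rfl | hne := eq_or_ne v r
    · exact ⟨0, rfl⟩
    · obtain ⟨n, hn⟩ := ih _ (hv ▸ hd v hne) (q v) rfl
      exact ⟨n + 1, hn⟩

lemma apply_ne_self_of_iterate_eq (hq : ∀ v, ∃ n, q^[n] v = r) {v : α} (hv : v ≠ r) :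
    q v ≠ v := by
  intro hfix
  obtain ⟨n, hn⟩ := hq v
  exact hv (Function.iterate_fixed hfix n ▸ hn)

lemma IsParentMap.exists_forall_iterate_eq_root [Finite α] (hq : IsParentMap r q) :
    ∃ n, ∀ v, q^[n] v = r := by
  choose n hn using hq.exists_iterate_eq_root
  obtain ⟨N, hN⟩ := (Set.finite_range n).bddAbove
  refine ⟨N, fun v => ?_⟩
  rw [← Nat.sub_add_cancel (hN ⟨v, rfl⟩), Function.iterate_add_apply, hn,
    Function.iterate_fixed hq.map_root]

theorem SimpleGraph.exists_isParentMap_adj (G : SimpleGraph α) (h : ∀ v, G.Reachable v r) :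
    ∃ q, IsParentMap r q ∧ ∀ v, v ≠ r → G.Adj v (q v) := by
  have step (v : α) (hv : v ≠ r) : ∃ w, G.Adj v w ∧ G.dist w r < G.dist v r := by
    obtain ⟨p, hp⟩ := (h v).exists_walk_length_eq_dist
    cases p with
    | nil => exact absurd rfl hv
    | cons hadj p =>
      rw [SimpleGraph.Walk.length_cons] at hp
      exact ⟨_, hadj, by have := G.dist_le p; omega⟩
  choose f hf_adj hf_dist using step
  classical
  let q v := if hv : v = r then r else f v hv
  have hq (v : α) (hv : v ≠ r) : q v = f v hv := dif_neg hv
  refine ⟨q, ⟨dif_pos rfl, exists_iterate_eq_of_map_lt (G.dist · r) fun v hv => ?_⟩,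
    fun v hv => hq v hv ▸ hf_adj v hv⟩
  simpa only [hq v hv] using hf_dist v hv

theorem exists_isParentMap_of_reflTransGen {R : α → α → Prop} (hR : Std.Symm R)
    (h : ∀ v, Relation.ReflTransGen R v r) :
    ∃ q, IsParentMap r q ∧ ∀ v, v ≠ r → R v (q v) := by
  obtain ⟨q, hq, hadj⟩ := (SimpleGraph.fromEdgeSet (Sym2.fromRel hR)).exists_isParentMap_adj
    fun v => by
      rw [SimpleGraph.reachable_fromEdgeSet_fromRel_eq_reflTransGen]
      exact h v
  exact ⟨q, hq, fun v hv => Sym2.fromRel_prop.mp (hadj v hv).1⟩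

end ParentMap

namespace Prufer

open Finset

variable {α : Type*} [LinearOrder α] {r : α} {q q' : α → α} {s : Finset α}

def leaves (r : α) (q : α → α) (s : Finset α) : Finset α :=
  s.erase r \ (s.erase r).image q

lemma leaves_subset : leaves r q s ⊆ s.erase r := sdiff_subset

-- Unlike the usual Prüfer sequence, this one runs until only the root is left, so it has one
-- more entry, which is always `r` (`getLast?_code`).
def code (r : α) (q : α → α) (s : Finset α) : List α :=
  if h : (leaves r q s).Nonempty then
    q ((leaves r q s).min' h) :: code r q (s.erase ((leaves r q s).min' h))
  else []
termination_by s.card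
decreasing_by exact card_erase_lt_of_mem (mem_of_mem_erase (leaves_subset (min'_mem _ h)))

lemma code_of_nonempty (h : (leaves r q s).Nonempty) :
    code r q s = q ((leaves r q s).min' h) :: code r q (s.erase ((leaves r q s).min' h)) := by
  rw [code, dif_pos h]

lemma code_of_not_nonempty (h : ¬(leaves r q s).Nonempty) : code r q s = [] := by
  rw [code, dif_neg h]

lemma leaves_nonempty (hq : ∀ v, ∃ n, q^[n] v = r) (hs : (s.erase r).Nonempty) :
    (leaves r q s).Nonempty := by
  by_contra h
  rw [not_nonempty_iff_eq_empty, leaves, sdiff_eq_empty_iff_subset] at h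
  -- Otherwise `q` maps `s.erase r` onto itself, and no orbit starting there reaches `r`.
  have himage := eq_of_subset_of_card_le h card_image_le
  have hmaps : Set.MapsTo q (s.erase r) (s.erase r) := fun v hv => by
    rw [mem_coe, himage]
    exact mem_image_of_mem q hv
  obtain ⟨v, hv⟩ := hs
  obtain ⟨n, hn⟩ := hq v
  simpa [hn] using hmaps.iterate n hv

theorem coe_code (hq : ∀ v, ∃ n, q^[n] v = r) (s : Finset α) :
    (code r q s : Multiset α) = (s.erase r).val.map q := by
  by_cases h : (leaves r q s).Nonempty
  · have hw := leaves_subset (min'_mem _ h)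
    rw [code_of_nonempty h, ← Multiset.cons_coe, coe_code hq, erase_right_comm,
      ← Multiset.map_cons, erase_val (s.erase r), Multiset.cons_erase (mem_val.mpr hw)]
  · rw [code_of_not_nonempty h, not_nonempty_iff_eq_empty.mp (mt (leaves_nonempty hq) h)]
    rfl
termination_by s.card
decreasing_by exact card_erase_lt_of_mem (mem_of_mem_erase (leaves_subset (min'_mem _ h)))

lemma length_code (hq : ∀ v, ∃ n, q^[n] v = r) (s : Finset α) :
    (code r q s).length = (s.erase r).card := by
  rw [← Multiset.coe_card, coe_code hq, Multiset.card_map, card_val]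

lemma leaves_eq_sdiff_code (hq : ∀ v, ∃ n, q^[n] v = r) (s : Finset α) :
    leaves r q s = s.erase r \ (code r q s).toFinset := by
  rw [leaves, ← List.toFinset_coe, coe_code hq]
  rfl

theorem eqOn_of_code_eq (hq : ∀ v, ∃ n, q^[n] v = r) (hq' : ∀ v, ∃ n, q'^[n] v = r)
    (s : Finset α) (h : code r q s = code r q' s) : Set.EqOn q q' (s.erase r) := by
  have hleaves : leaves r q s = leaves r q' s := by
    rw [leaves_eq_sdiff_code hq, leaves_eq_sdiff_code hq', h]
  intro v hv
  have hne := leaves_nonempty hq ⟨v, hv⟩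
  set w := (leaves r q s).min' hne
  have hw : w ∈ s.erase r := leaves_subset (min'_mem _ hne)
  have hne' : (leaves r q' s).Nonempty := hleaves ▸ hne
  rw [code_of_nonempty hne, code_of_nonempty hne', List.cons.injEq] at h
  simp only [← hleaves] at h
  obtain rfl | hvw := eq_or_ne v w
  · exact h.1
  · exact eqOn_of_code_eq hq hq' (s.erase w) h.2
      (mem_erase.mpr ⟨ne_of_mem_erase hv, mem_erase.mpr ⟨hvw, mem_of_mem_erase hv⟩⟩)
termination_by s.card
decreasing_by exact card_erase_lt_of_mem (mem_of_mem_erase hw)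

theorem getLast?_code (hq : ∀ v, ∃ n, q^[n] v = r) (s : Finset α)
    (hs : Set.MapsTo q (s.erase r) s) (hne : (s.erase r).Nonempty) :
    (code r q s).getLast? = some r := by
  have hl := leaves_nonempty hq hne
  set w := (leaves r q s).min' hl
  have hw : w ∈ s.erase r := leaves_subset (min'_mem _ hl)
  have hwq : w ∉ (s.erase r).image q := (mem_sdiff.mp (min'_mem _ hl)).2
  have hs' : Set.MapsTo q ((s.erase w).erase r) (s.erase w) := fun v hv => by
    rw [coe_erase, coe_erase] at hv
    have hv' : v ∈ s.erase r := by simp_all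
    exact mem_erase.mpr ⟨fun h => hwq (h ▸ mem_image_of_mem q hv'), hs hv'⟩
  rw [code_of_nonempty hl]
  rcases ((s.erase w).erase r).eq_empty_or_nonempty with he | hne'
  · have hnil : code r q (s.erase w) = [] :=
      List.eq_nil_of_length_eq_zero (by rw [length_code hq, he, card_empty])
    rw [hnil]
    by_contra hqw
    have : q w ∈ (s.erase w).erase r :=
      mem_erase.mpr ⟨fun h => hqw (by rw [h]; rfl),
        mem_erase.mpr ⟨apply_ne_self_of_iterate_eq hq (ne_of_mem_erase hw), hs hw⟩⟩
    simp [he] at this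
  · rw [List.getLast?_cons, getLast?_code hq (s.erase w) hs' hne']
    rfl
termination_by s.card
decreasing_by exact card_erase_lt_of_mem (mem_of_mem_erase hw)

end Prufer

theorem card_isParentMap_le {α : Type*} [LinearOrder α] [Fintype α] (r : α) :
    Nat.card {q : α → α // IsParentMap r q} ≤ Fintype.card α ^ (Fintype.card α - 2) := by
  let encode (q : {q : α → α // IsParentMap r q}) : List.Vector α (Fintype.card α - 2) :=
    ⟨(Prufer.code r q.1 Finset.univ).dropLast, by
      rw [List.length_dropLast, Prufer.length_code q.2.exists_iterate_eq_root,
        Finset.card_erase_of_mem (Finset.mem_univ r), Finset.card_univ]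
      omega⟩
  have hencode : Function.Injective encode := by
    rintro ⟨q, hq⟩ ⟨q', hq'⟩ h
    have hrest : Set.EqOn q q' (Finset.univ.erase r) := by
      rcases (Finset.univ.erase r).eq_empty_or_nonempty with he | hne
      · simp [he]
      · have hlast {q} (hq : IsParentMap r q) :=
          List.dropLast_append_getLast? r (Prufer.getLast?_code hq.exists_iterate_eq_root _
            (fun _ _ => Finset.mem_univ _) hne)
        refine Prufer.eqOn_of_code_eq hq.2 hq'.2 _ ?_
        rw [← hlast hq, ← hlast hq']
        exact congrArg (· ++ [r]) (congrArg Subtype.val h)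
    refine Subtype.ext (funext fun v => ?_)
    obtain rfl | hv := eq_or_ne v r
    · exact hq.map_root.trans hq'.map_root.symm
    · exact hrest (by simp [hv] : v ∈ Finset.univ.erase r)
  calc Nat.card {q : α → α // IsParentMap r q}
      ≤ Nat.card (List.Vector α (Fintype.card α - 2)) :=
        Nat.card_le_card_of_injective encode hencode
    _ = Fintype.card α ^ (Fintype.card α - 2) := by simp [Nat.card_eq_fintype_card]

theorem LinearMap.det_one_sub_of_isNilpotent {R M : Type*} [CommRing R] [IsDomain R]
    [AddCommGroup M] [Module R M] [Module.Free R M] [Module.Finite R M] {f : Module.End R M}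
    (hf : IsNilpotent f) : (1 - f).det = 1 := by
  have := f.eval_charpoly 1
  rwa [hf.charpoly_eq_X_pow_finrank, Polynomial.eval_pow, Polynomial.eval_X, one_pow, map_one,
    eq_comm] at this

section ParentShift

variable {E : Type*} [AddCommGroup E] [Module ℝ E] {m : ℕ} {q : Fin (m + 1) → Fin (m + 1)}

def parentShift (q : Fin (m + 1) → Fin (m + 1)) : (Fin m → E) →ₗ[ℝ] (Fin m → E) :=
  LinearMap.funLeft ℝ E (fun k => q k.succ) ∘ₗ
    (Fin.consLinearEquiv ℝ (fun _ => E)).toLinearMap ∘ₗ LinearMap.inr ℝ E (Fin m → E)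

lemma parentShift_apply (q : Fin (m + 1) → Fin (m + 1)) (y : Fin m → E) (k : Fin m) :
    parentShift q y k = (Fin.cons 0 y : Fin (m + 1) → E) (q k.succ) := rfl

lemma cons_zero_parentShift_pow (hq : q 0 = 0) (n : ℕ) (y : Fin m → E) :
    (Fin.cons 0 ((parentShift q ^ n) y) : Fin (m + 1) → E) = Fin.cons 0 y ∘ q^[n] := by
  induction n with
  | zero => rfl
  | succ n ih =>
    rw [Function.iterate_succ, ← Function.comp_assoc, ← ih, pow_succ', Module.End.mul_apply]
    funext v
    cases v using Fin.cases <;> simp [hq, parentShift_apply]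

lemma IsParentMap.isNilpotent_parentShift (hq : IsParentMap 0 q) :
    IsNilpotent (parentShift (E := E) q) := by
  obtain ⟨n, hn⟩ := hq.exists_forall_iterate_eq_root
  refine ⟨n, LinearMap.ext fun y => funext fun k => ?_⟩
  simpa [hn] using congrFun (cons_zero_parentShift_pow hq.map_root n y) k.succ

end ParentShift

section TreeSet

variable {E : Type*} [NormedAddCommGroup E] [NormedSpace ℝ E] {m : ℕ}

def treeSet (x₀ : E) (ε : ℝ) (q : Fin (m + 1) → Fin (m + 1)) : Set (Fin m → E) :=
  {y | ∀ k, ‖y k - (Fin.cons x₀ y : Fin (m + 1) → E) (q k.succ)‖ ≤ ε}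

lemma treeSet_eq_preimage (x₀ : E) (ε : ℝ) (q : Fin (m + 1) → Fin (m + 1)) :
    treeSet x₀ ε q = ⇑(1 - parentShift (E := E) q) ⁻¹'
      Set.univ.pi fun k : Fin m =>
        Metric.closedBall ((Fin.cons x₀ 0 : Fin (m + 1) → E) (q k.succ)) ε := by
  have hcons (y : Fin m → E) (v : Fin (m + 1)) : (Fin.cons x₀ y : Fin (m + 1) → E) v =
      (Fin.cons 0 y : Fin (m + 1) → E) v + (Fin.cons x₀ 0 : Fin (m + 1) → E) v := by
    cases v using Fin.cases <;> simp
  ext y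
  simp only [treeSet, Set.mem_ofPred_eq, Set.mem_preimage, Set.mem_univ_pi, Metric.mem_closedBall,
    dist_eq_norm, LinearMap.sub_apply, Module.End.one_apply, Pi.sub_apply, parentShift_apply,
    hcons y, sub_sub]

theorem measure_treeSet [FiniteDimensional ℝ E] [MeasurableSpace E] [BorelSpace E]
    (μ : Measure E) [μ.IsAddHaarMeasure] (x₀ : E) (ε : ℝ) {q : Fin (m + 1) → Fin (m + 1)}
    (hq : IsParentMap 0 q) :
    Measure.pi (fun _ => μ) (treeSet x₀ ε q) = μ (Metric.closedBall 0 ε) ^ m := by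
  have hdet := LinearMap.det_one_sub_of_isNilpotent (hq.isNilpotent_parentShift (E := E))
  rw [treeSet_eq_preimage, Measure.addHaar_preimage_linearMap _ (by simp [hdet]), hdet,
    Measure.pi_pi]
  simp [Measure.addHaar_closedBall_center μ]

end TreeSet

lemma clusterSet_subset_iUnion_treeSet (m : ℕ) (x₀ : V3) (ε : ℝ) :
    clusterSet m x₀ ε ⊆
      ⋃ q : {q // IsParentMap (0 : Fin (m + 1)) q}, treeSet x₀ ε q.1 := by
  intro y hy
  let z : Fin (m + 1) → V3 := Fin.cons x₀ y
  have hsymm : Std.Symm fun k l => ‖z k - z l‖ ≤ ε :=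
    ⟨fun k l h => by rwa [norm_sub_rev]⟩
  obtain ⟨q, hq, hclose⟩ := exists_isParentMap_of_reflTransGen hsymm fun v => hy v 0
  exact Set.mem_iUnion.mpr ⟨⟨q, hq⟩, fun k => hclose k.succ k.succ_ne_zero⟩

theorem volume_clusterSet_le_general (ε : ℝ) (hε : 0 < ε) (m : ℕ) (x₀ : V3) :
    volume (clusterSet m x₀ ε) ≤
      ENNReal.ofReal (((m : ℝ) + 1) ^ (m - 1) * (4 * π / 3) ^ m * ε ^ (3 * m)) := by
  have hcard : Nat.card {q // IsParentMap (0 : Fin (m + 1)) q} ≤ (m + 1) ^ (m - 1) := by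
    simpa using card_isParentMap_le (0 : Fin (m + 1))
  calc volume (clusterSet m x₀ ε)
      ≤ ∑' q : {q // IsParentMap (0 : Fin (m + 1)) q}, volume (treeSet x₀ ε q.1) :=
        (measure_mono (clusterSet_subset_iUnion_treeSet m x₀ ε)).trans (measure_iUnion_le _)
    _ = Nat.card {q // IsParentMap (0 : Fin (m + 1)) q} *
          volume (Metric.closedBall (0 : V3) ε) ^ m := by
        simp only [volume_pi, fun q : {q // IsParentMap _ q} => measure_treeSet volume x₀ ε q.2,
          ENNReal.tsum_const, ENat.card_eq_coe_natCard]
        rfl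
    _ ≤ ((m + 1) ^ (m - 1) : ℕ) * volume (Metric.closedBall (0 : V3) ε) ^ m := by
        gcongr
    _ = ENNReal.ofReal (((m : ℝ) + 1) ^ (m - 1) * (4 * π / 3) ^ m * ε ^ (3 * m)) := by
        rw [EuclideanSpace.volume_closedBall_fin_three, ← ENNReal.ofReal_pow hε.le,
          ← ENNReal.ofReal_mul (by positivity), ← ENNReal.ofReal_pow (by positivity),
          ← ENNReal.ofReal_natCast, ← ENNReal.ofReal_mul (by positivity)]
        congr 1
        push_cast
        ring

/-- Volume bound for connected cluster configurations: the Lebesgue measure of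
`Δ_m(x₀,ε)` in `ℝ^{3m}` is at most `(m+1)^{m−1} (4π/3)^m ε^{3m}`. -/
theorem volume_clusterSet_le (ε : ℝ) (hε : 0 < ε) (m : ℕ) (hm : 1 ≤ m) (x₀ : V3) :
    volume (clusterSet m x₀ ε) ≤
      ENNReal.ofReal (((m : ℝ) + 1) ^ (m - 1) * (4 * π / 3) ^ m * ε ^ (3 * m)) :=
  volume_clusterSet_le_general ε hε m x₀
end
end
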